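/- arXiv:1812.08997 — 2 statements merged into one kernel-verified Lean document; each statement's English description precedes it below -/
import Mathlib

section
/- Double robustness of the weight-corrected variance-reduced gradient (Theorem 1): Let n ≥ 1 and let p, q : Fin n → ℝ be probability mass functions (nonnegative, each summing to 1) with q i > 0 for every i. Let F, G : Fin n → ℝ^d be vector-valued functions, let w : Fin n → ℝ be a weight function, and set ḡ = ∑_i p i • G i. If either (∀ i, w i = p i / q i) or (∀ i, G i = F i), then the expectation under q of the doubly robust estimator equals the target expectation under p; that is, ∑_i q i • (w i • (F i - G i) + ḡ) = ∑_i p i • F i. -/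
/-!
Under `q`, the doubly robust estimator has bias `∑ i, (q i * w i - p i) • (F i - G i)`: every
term is the product of the weight error and the control-variate error, so the bias vanishes as
soon as either model is exact.
-/

open Finset

theorem sum_smul_doublyRobust_eq_add_bias {ι R M : Type*} [Fintype ι] [CommRing R]
    [AddCommGroup M] [Module R M] (p q w : ι → R) (F G : ι → M) (hq : ∑ i, q i = 1) :
    ∑ i, q i • (w i • (F i - G i) + ∑ j, p j • G j) =
      ∑ i, p i • F i + ∑ i, (q i * w i - p i) • (F i - G i) := by
  simp only [smul_add, smul_smul, sum_add_distrib, ← sum_smul, hq, one_smul, sub_smul,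
    smul_sub, sum_sub_distrib]
  abel

theorem sdrg_double_robustness_general
    (n d : ℕ)
    (p q : Fin n → ℝ)
    (hq1 : ∑ i, q i = 1)
    (hqpos : ∀ i, 0 < q i)
    (F G : Fin n → Fin d → ℝ) (w : Fin n → ℝ)
    (gbar : Fin d → ℝ) (hgbar : gbar = ∑ i, p i • G i)
    (h : (∀ i, w i = p i / q i) ∨ (∀ i, G i = F i)) :
    ∑ i, q i • (w i • (F i - G i) + gbar) = ∑ i, p i • F i := by
  subst hgbar
  rw [sum_smul_doublyRobust_eq_add_bias p q w F G hq1, add_eq_left]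
  refine sum_eq_zero fun i _ => ?_
  rcases h with hw | hG
  · rw [hw i, mul_div_cancel₀ _ (hqpos i).ne', sub_self, zero_smul]
  · rw [hG i, sub_self, smul_zero]

theorem sdrg_double_robustness
    (n d : ℕ) (hn : 1 ≤ n)
    (p q : Fin n → ℝ)
    (hp0 : ∀ i, 0 ≤ p i) (hp1 : ∑ i, p i = 1)
    (hq0 : ∀ i, 0 ≤ q i) (hq1 : ∑ i, q i = 1)
    (hqpos : ∀ i, 0 < q i)
    (F G : Fin n → Fin d → ℝ) (w : Fin n → ℝ)
    (gbar : Fin d → ℝ) (hgbar : gbar = ∑ i, p i • G i)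
    (h : (∀ i, w i = p i / q i) ∨ (∀ i, G i = F i)) :
    ∑ i, q i • (w i • (F i - G i) + gbar) = ∑ i, p i • F i :=
  sdrg_double_robustness_general n d p q hq1 hqpos F G w gbar hgbar h
end

section
/- Reduction of the weight-corrected control-variate update to the momentum update (Proposition 1): Let η, γ : ℝ with η ≠ 1, and let ∇f, Δprev ∈ ℝ^d. Setting the importance weight to the constant η and the control variate and its expectation both equal to c = (γ / (1 - η)) • Δprev, the doubly robust update η • ∇f - η • c + c equals the momentum update η • ∇f + γ • Δprev. -/
theorem smul_sub_smul_add_self {R M : Type*} [Ring R] [AddCommGroup M] [Module R M]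
    (w : R) (g c : M) : w • g - w • c + c = w • g + (1 - w) • c := by
  rw [sub_smul, one_smul]
  abel

theorem smul_div_smul_cancel {K M : Type*} [Field K] [AddCommGroup M] [Module K M]
    {a : K} (ha : a ≠ 0) (b : K) (v : M) : a • (b / a) • v = b • v := by
  rw [smul_smul, mul_div_cancel₀ b ha]

theorem sdrg_reduces_to_momentum
    (d : ℕ) (η γ : ℝ) (hη : η ≠ 1)
    (gradf Δprev : Fin d → ℝ)
    (c : Fin d → ℝ) (hc : c = (γ / (1 - η)) • Δprev) :
    η • gradf - η • c + c = η • gradf + γ • Δprev := by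
  rw [smul_sub_smul_add_self, hc, smul_div_smul_cancel (sub_ne_zero.mpr hη.symm)]
end
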